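/- If H is a uniform central graph with P = ⟨CP(H)⟩, κ = cov_A(P), and |I(H)| ≤ sκ + t with s, t natural numbers and t < κ, then r(H) ≤ s + 1. -/

import Mathlib

/-!
Let `r` be the radius. In a uniform central graph every central vertex is at distance exactly `r`
from every vertex of the centered periphery `CP`. Sort the vertices by their distance `m` to the
center. For each level `1 ≤ m ≤ r`, the sets
`P(x) = {p ∈ CP | some radial path of length r from the center to p passes through x}`, `x` at
level `m`, cover `CP`, and they satisfy condition A: if `z` is a central vertex nearest to `x` and
`w` is the neighbour of `z` on a geodesic to `x`, then `w` is not central, so some `u` is at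
distance `> r` from `w`; this `u` lies in `CP` and is too far from `x` to be within distance `1`
of any vertex of `P(x)`. Hence each level `1 ≤ m < r` contains at least `κ` vertices, all of them
intermediate, so `(r - 1) κ ≤ |I(H)| ≤ s κ + t < (s + 1) κ`.
-/

open SimpleGraph

variable {V : Type*} {ι : Type*}

/-- Eccentricity (in `ℕ∞`) of a vertex. -/
noncomputable def gecc (G : SimpleGraph V) (v : V) : ℕ∞ := ⨆ u, G.edist v u

/-- Radius of a graph. -/
noncomputable def grad (G : SimpleGraph V) : ℕ∞ := ⨅ v, gecc G v

/-- Diameter of a graph. -/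
noncomputable def gdiam (G : SimpleGraph V) : ℕ∞ := ⨆ v, gecc G v

/-- The center: vertices of minimum eccentricity. -/
def gcenter (G : SimpleGraph V) : Set V := {v | gecc G v = grad G}

/-- Eccentric vertices of `v`. -/
def eccSet (G : SimpleGraph V) (v : V) : Set V := {u | G.edist v u = gecc G v}

/-- The centered periphery. -/
def cperiph (G : SimpleGraph V) : Set V := ⋃ z ∈ gcenter G, eccSet G z

/-- Uniform central graph. -/
def IsUCG (G : SimpleGraph V) : Prop := ∀ c ∈ gcenter G, eccSet G c = cperiph G

/-- Condition A. -/
def CondA (G : SimpleGraph V) (P : ι → Set V) : Prop :=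
  ∀ i, ∃ p, p ∉ P i ∧ ∀ q ∈ P i, 2 ≤ G.edist q p

/-- Condition B. -/
def CondB (G : SimpleGraph V) (P : ι → Set V) : Prop :=
  ∀ i, ∀ p ∈ P i,
    (∃ p', p' ∉ P i ∧ 3 ≤ G.edist p p') ∨ (∃ j, j ≠ i ∧ ∀ q ∈ P j, 2 ≤ G.edist p q)

/-- Condition A′. -/
def CondA' (G : SimpleGraph V) (P : ι → Set V) : Prop :=
  ∀ i, (∃ p, p ∉ P i ∧ ∀ q ∈ P i, 3 ≤ G.edist q p) ∨
    (∃ j, j ≠ i ∧ ∀ q ∈ P i, ∀ q' ∈ P j, 2 ≤ G.edist q q')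

/-- Condition B′. -/
def CondB' (G : SimpleGraph V) (P : ι → Set V) : Prop :=
  ∀ i, ∀ p ∈ P i, ∃ j, j ≠ i ∧ ∀ q ∈ P j, 2 ≤ G.edist p q

/-- Minimum size of a covering satisfying condition A. -/
noncomputable def covA (G : SimpleGraph V) : ℕ :=
  sInf {k | ∃ P : Fin k → Set V, (⋃ i, P i) = Set.univ ∧ CondA G P}

/-- Minimum size of a covering satisfying conditions A and B. -/
noncomputable def covAB (G : SimpleGraph V) : ℕ :=
  sInf {k | ∃ P : Fin k → Set V, (⋃ i, P i) = Set.univ ∧ CondA G P ∧ CondB G P}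

/-- Distance from a vertex to the center. -/
noncomputable def distToCenter (G : SimpleGraph V) (u : V) : ℕ∞ :=
  ⨅ z ∈ gcenter G, G.edist u z

/-- The set of vertices at distance exactly `m` from the center. -/
def Dlevel (G : SimpleGraph V) (m : ℕ) : Set V := {u | distToCenter G u = (m : ℕ∞)}

/-- Vertices of the centered periphery lying on a radial path through `x`. -/
def Pset (G : SimpleGraph V) (r : ℕ) (x : V) : Set V :=
  {p | p ∈ cperiph G ∧ ∃ c ∈ gcenter G, ∃ W : G.Walk c p,
    W.IsPath ∧ W.length = r ∧ x ∈ W.support}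

/-- All vertices lying on some radial path through `x`. -/
def radialSupport (G : SimpleGraph V) (r : ℕ) (x : V) : Set V :=
  {u | ∃ c ∈ gcenter G, ∃ p ∈ cperiph G, ∃ W : G.Walk c p,
    W.IsPath ∧ W.length = r ∧ x ∈ W.support ∧ u ∈ W.support}

namespace SimpleGraph

variable {G : SimpleGraph V}

lemma Walk.dist_add_dist_le_length {a b x : V} (W : G.Walk a b) (hx : x ∈ W.support) :
    G.dist a x + G.dist x b ≤ W.length := by
  classical
  conv_rhs => rw [← W.take_spec hx, Walk.length_append]
  exact add_le_add (dist_le _) (dist_le _)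

lemma le_edist_induce (s : Set V) (u v : s) : G.edist u v ≤ (G.induce s).edist u v := by
  by_cases h : (G.induce s).Reachable u v
  · obtain ⟨W, hW⟩ := h.exists_walk_length_eq_edist
    rw [← hW, ← Walk.length_map (Embedding.induce s).toHom]
    exact edist_le _
  · rw [edist_eq_top_of_not_reachable h]
    exact le_top

protected lemma Connected.edist_eq_dist (hconn : G.Connected) (u v : V) :
    G.edist u v = G.dist u v :=
  (hconn u v).coe_dist_eq_edist.symm

end SimpleGraph

lemma card_mul_le_ncard_of_pairwiseDisjoint {α : Type*} [Finite α] {t : Finset ι}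
    {D : ι → Set α} {S : Set α} {κ : ℕ} (hD : (t : Set ι).PairwiseDisjoint D)
    (hDS : ∀ i ∈ t, D i ⊆ S) (hκ : ∀ i ∈ t, κ ≤ (D i).ncard) :
    t.card * κ ≤ S.ncard := by
  classical
  have := Fintype.ofFinite α
  calc t.card * κ ≤ ∑ i ∈ t, (D i).toFinset.card := by
        simpa [Set.ncard_eq_toFinset_card'] using Finset.card_nsmul_le_sum t _ κ hκ
    _ = (t.biUnion fun i => (D i).toFinset).card := by
        refine (Finset.card_biUnion fun i hi j hj hij => ?_).symm
        simpa using hD hi hj hij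
    _ ≤ S.toFinset.card := Finset.card_le_card <| by
        simpa [Finset.biUnion_subset] using hDS
    _ = S.ncard := (Set.ncard_eq_toFinset_card' S).symm

lemma covA_le_natCard {W : Type*} {H : SimpleGraph W} [Finite ι] {P : ι → Set W}
    (hP : ⋃ i, P i = Set.univ) (hA : CondA H P) : covA H ≤ Nat.card ι := by
  have := Fintype.ofFinite ι
  let e := (Fintype.equivFin ι).symm
  rw [Nat.card_eq_fintype_card]
  refine Nat.sInf_le ⟨P ∘ e, ?_, fun i => hA (e i)⟩
  rw [← hP]
  exact e.surjective.iUnion_comp P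

section Center

variable {G : SimpleGraph V} {r m : ℕ}

lemma grad_le_gecc (v : V) : grad G ≤ gecc G v := iInf_le _ v

lemma exists_edist_eq_gecc [Finite V] (v : V) : ∃ u, G.edist v u = gecc G v :=
  have : Nonempty V := ⟨v⟩
  exists_eq_ciSup_of_finite

lemma SimpleGraph.Connected.exists_grad_eq_coe [Finite V] (hconn : G.Connected) :
    ∃ r : ℕ, grad G = r := by
  obtain ⟨v⟩ := hconn.nonempty
  obtain ⟨u, hu⟩ := exists_edist_eq_gecc (G := G) v
  have hv : gecc G v ≠ ⊤ := hu ▸ edist_ne_top_iff_reachable.mpr (hconn v u)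
  obtain ⟨r, hr⟩ := ENat.ne_top_iff_exists.mp (ne_top_of_le_ne_top hv (grad_le_gecc v))
  exact ⟨r, hr.symm⟩

lemma dist_le_of_mem_gcenter (hconn : G.Connected) (hr : grad G = r) {z : V}
    (hz : z ∈ gcenter G) (u : V) : G.dist z u ≤ r := by
  have h : G.edist z u ≤ gecc G z := le_iSup (G.edist z) u
  rw [hz, hr, hconn.edist_eq_dist] at h
  exact_mod_cast h

lemma exists_lt_dist_of_notMem_gcenter [Finite V] (hconn : G.Connected) (hr : grad G = r)
    {v : V} (hv : v ∉ gcenter G) : ∃ u, r < G.dist v u := by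
  obtain ⟨u, hu⟩ := exists_edist_eq_gecc (G := G) v
  have h : grad G < G.edist v u := hu ▸ lt_of_le_of_ne (grad_le_gecc v) (Ne.symm hv)
  rw [hr, hconn.edist_eq_dist] at h
  exact ⟨u, by exact_mod_cast h⟩

lemma IsUCG.dist_eq (hUCG : IsUCG G) (hconn : G.Connected) (hr : grad G = r) {z p : V}
    (hz : z ∈ gcenter G) (hp : p ∈ cperiph G) : G.dist z p = r := by
  rw [← hUCG z hz] at hp
  have h : G.edist z p = gecc G z := hp
  rw [hz, hr, hconn.edist_eq_dist] at h
  exact_mod_cast h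

lemma IsUCG.mem_cperiph (hUCG : IsUCG G) (hconn : G.Connected) (hr : grad G = r) {z u : V}
    (hz : z ∈ gcenter G) (h : G.dist z u = r) : u ∈ cperiph G := by
  rw [← hUCG z hz]
  show G.edist z u = gecc G z
  rw [hz, hr, hconn.edist_eq_dist, h]

lemma pairwiseDisjoint_Dlevel (s : Set ℕ) : s.PairwiseDisjoint (Dlevel G) :=
  fun _ _ _ _ hmn => Set.disjoint_left.mpr fun _ hm hn => hmn (by exact_mod_cast hm.symm.trans hn)

lemma le_dist_of_mem_Dlevel (hconn : G.Connected) {x z : V} (hx : x ∈ Dlevel G m)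
    (hz : z ∈ gcenter G) : m ≤ G.dist x z := by
  have h : distToCenter G x ≤ G.edist x z := iInf₂_le z hz
  rw [show distToCenter G x = m from hx, hconn.edist_eq_dist] at h
  exact_mod_cast h

lemma exists_dist_eq_of_mem_Dlevel (hconn : G.Connected) {x : V} (hx : x ∈ Dlevel G m) :
    ∃ z ∈ gcenter G, G.dist x z = m := by
  have hinf : ⨅ z : gcenter G, G.edist x z = m := (iInf_subtype'' _ _).trans hx
  have : Nonempty (gcenter G) := by
    by_contra h
    rw [not_nonempty_iff] at h
    exact ENat.top_ne_natCast m (by rwa [iInf_of_empty] at hinf)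
  obtain ⟨z, hz⟩ := ENat.exists_eq_iInf fun z : gcenter G => G.edist x z
  rw [hinf, hconn.edist_eq_dist] at hz
  exact ⟨z, z.2, by exact_mod_cast hz⟩

lemma mem_Dlevel_of_dist_eq (hconn : G.Connected) {x z : V} (hz : z ∈ gcenter G)
    (hxz : G.dist x z = m) (h : ∀ z' ∈ gcenter G, m ≤ G.dist x z') : x ∈ Dlevel G m := by
  refine le_antisymm ?_ (le_iInf₂ fun z' hz' => ?_)
  · exact (iInf₂_le z hz).trans_eq (by rw [hconn.edist_eq_dist, hxz])
  · rw [hconn.edist_eq_dist]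
    exact_mod_cast h z' hz'

lemma Dlevel_subset_diff (hUCG : IsUCG G) (hconn : G.Connected) (hr : grad G = r)
    (hm : 0 < m) (hmr : m < r) : Dlevel G m ⊆ Set.univ \ (gcenter G ∪ cperiph G) := by
  intro x hx
  obtain ⟨z, hz, hxz⟩ := exists_dist_eq_of_mem_Dlevel hconn hx
  refine ⟨trivial, ?_⟩
  rintro (hxC | hxP)
  · have := le_dist_of_mem_Dlevel hconn hx hxC
    rw [dist_self] at this
    omega
  · have := hUCG.dist_eq hconn hr hz hxP
    rw [SimpleGraph.dist_comm] at this
    omega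

lemma add_dist_le_of_mem_Pset (hconn : G.Connected) {x q : V} (hx : x ∈ Dlevel G m)
    (hq : q ∈ Pset G r x) : m + G.dist x q ≤ r := by
  obtain ⟨-, c, hc, W, -, hW, hxW⟩ := hq
  have hcx := W.dist_add_dist_le_length hxW
  have hmx := le_dist_of_mem_Dlevel hconn hx hc
  rw [SimpleGraph.dist_comm] at hmx
  omega

lemma exists_mem_cperiph_add_two_le [Finite V] (hUCG : IsUCG G) (hconn : G.Connected)
    (hr : grad G = r) {x : V} (hm : 0 < m) (hx : x ∈ Dlevel G m) :
    ∃ u ∈ cperiph G, r + 2 ≤ m + G.dist x u := by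
  obtain ⟨z, hz, hxz⟩ := exists_dist_eq_of_mem_Dlevel hconn hx
  obtain ⟨W, hW⟩ := hconn.exists_walk_length_eq_dist z x
  rw [SimpleGraph.dist_comm, hxz] at hW
  set w := W.getVert 1
  have hzw : G.Adj z w := by simpa using W.adj_getVert_succ (i := 0) (by omega)
  have hwx : G.dist w x ≤ m - 1 := by simpa [hW] using dist_le (W.drop 1)
  have hw : w ∉ gcenter G := fun hw => by
    have := le_dist_of_mem_Dlevel hconn hx hw
    rw [SimpleGraph.dist_comm] at this
    omega
  obtain ⟨u, hwu⟩ := exists_lt_dist_of_notMem_gcenter hconn hr hw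
  have hzu := dist_le_of_mem_gcenter hconn hr hz u
  have hwz : G.dist w z = 1 := dist_eq_one_iff_adj.mpr hzw.symm
  have hwzu : G.dist w u ≤ G.dist w z + G.dist z u := hconn.dist_triangle
  have hwxu : G.dist w u ≤ G.dist w x + G.dist x u := hconn.dist_triangle
  exact ⟨u, hUCG.mem_cperiph hconn hr hz (by omega), by omega⟩

end Center

def levelCover (G : SimpleGraph V) (r m : ℕ) (x : Dlevel G m) : Set (cperiph G) :=
  {p | (p : V) ∈ Pset G r x}

section LevelCover

variable {G : SimpleGraph V} {r m : ℕ}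

lemma condA_levelCover [Finite V] (hUCG : IsUCG G) (hconn : G.Connected) (hr : grad G = r)
    (hm : 0 < m) : CondA (G.induce (cperiph G)) (levelCover G r m) := by
  rintro ⟨x, hx⟩
  obtain ⟨u, hu, hxu⟩ := exists_mem_cperiph_add_two_le hUCG hconn hr hm hx
  refine ⟨⟨u, hu⟩, fun huP => ?_, fun q hq => ?_⟩
  · have := add_dist_le_of_mem_Pset (q := u) hconn hx huP
    omega
  · have hxq := add_dist_le_of_mem_Pset hconn hx hq
    have hxqu : G.dist x u ≤ G.dist x q + G.dist q u := hconn.dist_triangle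
    refine le_trans ?_ (le_edist_induce _ q ⟨u, hu⟩)
    rw [hconn.edist_eq_dist]
    exact_mod_cast (by omega : 2 ≤ G.dist q u)

lemma iUnion_levelCover (hUCG : IsUCG G) (hconn : G.Connected) (hr : grad G = r)
    (hmr : m ≤ r) : ⋃ x, levelCover G r m x = Set.univ := by
  refine Set.eq_univ_of_forall fun ⟨p, hp⟩ => ?_
  obtain ⟨z, hz, -⟩ := Set.mem_iUnion₂.mp hp
  obtain ⟨W, hWpath, hW⟩ := hconn.exists_path_of_dist z p
  rw [hUCG.dist_eq hconn hr hz hp] at hW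
  set x := W.getVert m
  have hzx : G.dist z x ≤ m :=
    (dist_le (W.take m)).trans (by rw [Walk.take_length]; exact min_le_left _ _)
  have hxp : G.dist x p ≤ r - m := by simpa [hW] using dist_le (W.drop m)
  have hx : x ∈ Dlevel G m := by
    have hmin : ∀ z' ∈ gcenter G, m ≤ G.dist x z' := fun z' hz' => by
      have : G.dist z' p ≤ G.dist z' x + G.dist x p := hconn.dist_triangle
      rw [hUCG.dist_eq hconn hr hz' hp, SimpleGraph.dist_comm] at this
      omega
    refine mem_Dlevel_of_dist_eq hconn hz ?_ hmin
    have := hmin z hz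
    rw [SimpleGraph.dist_comm] at hzx
    omega
  exact Set.mem_iUnion.mpr ⟨⟨x, hx⟩, hp, z, hz, W, hWpath, hW, W.getVert_mem_support m⟩

lemma covA_induce_cperiph_le_ncard_Dlevel [Finite V] (hUCG : IsUCG G) (hconn : G.Connected)
    (hr : grad G = r) (hm : 0 < m) (hmr : m ≤ r) :
    covA (G.induce (cperiph G)) ≤ (Dlevel G m).ncard := by
  rw [← Nat.card_coe_set_eq]
  exact covA_le_natCard (iUnion_levelCover hUCG hconn hr hmr) (condA_levelCover hUCG hconn hr hm)

end LevelCover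

/-- If `|I(H)| ≤ sκ + t` with `t < κ`, then `r(H) ≤ s + 1`. -/
theorem stmt8 [Fintype V] (G : SimpleGraph V) (hconn : G.Connected) (hUCG : IsUCG G)
    (s t : ℕ) (ht : t < covA (G.induce (cperiph G)))
    (hI : (Set.univ \ (gcenter G ∪ cperiph G)).ncard ≤
      s * covA (G.induce (cperiph G)) + t) :
    grad G ≤ (s : ℕ∞) + 1 := by
  obtain ⟨r, hr⟩ := hconn.exists_grad_eq_coe
  set κ := covA (G.induce (cperiph G))
  have hlevels : (r - 1) * κ ≤ (Set.univ \ (gcenter G ∪ cperiph G)).ncard := by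
    simpa using card_mul_le_ncard_of_pairwiseDisjoint (t := Finset.Ico 1 r) (D := Dlevel G)
      (pairwiseDisjoint_Dlevel _)
      (fun m hm => Dlevel_subset_diff hUCG hconn hr (Finset.mem_Ico.mp hm).1
        (Finset.mem_Ico.mp hm).2)
      (fun m hm => covA_induce_cperiph_le_ncard_Dlevel hUCG hconn hr (Finset.mem_Ico.mp hm).1
        (Finset.mem_Ico.mp hm).2.le)
  have hκ : (r - 1) * κ < (s + 1) * κ := by rw [add_one_mul]; omega
  have hrs : r ≤ s + 1 := by have := Nat.lt_of_mul_lt_mul_right hκ; omega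
  rw [hr]
  exact_mod_cast hrs
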